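/- Let R = ∅ or R = {Loop}. For every path formula π ∈ PDLsf[R] there exist path formulas Minπ, Maxπ ∈ PDLsf[R] such that for all MSCs M over P and Σ and events e, f: (e,f) ∈ ⟦Minπ⟧_M iff (⟦π⟧_M(e) ≠ ∅ and f = min_π(e)), and (e,f) ∈ ⟦Maxπ⟧_M iff (⟦π⟧_M(e) ≠ ∅ and f = max_π(e)). -/

import Mathlib

set_option maxHeartbeats 1000000

/-! ## Message sequence charts -/

/-- A message sequence chart (MSC) over processes `P` and labels `Lab`.
Events are natural numbers; `E` is the finite nonempty set of events. -/
structure MSC (P : Type) (Lab : Type) where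
  /-- the finite set of events -/
  E : Finset ℕ
  nonemptyE : E.Nonempty
  /-- process edges `→` (direct successor on a process) -/
  proc : ℕ → ℕ → Prop
  /-- message edges `◁` -/
  msg : ℕ → ℕ → Prop
  /-- location (process) of each event -/
  loc : ℕ → P
  /-- label of each event -/
  lab : ℕ → Lab
  proc_mem : ∀ e f, proc e f → e ∈ E ∧ f ∈ E
  msg_mem : ∀ e f, msg e f → e ∈ E ∧ f ∈ E
  proc_loc : ∀ e f, proc e f → loc e = loc f
  msg_loc : ∀ e f, msg e f → loc e ≠ loc f
  /-- on each process, any two events are comparable w.r.t. `→⁺` -/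
  proc_total : ∀ e f, e ∈ E → f ∈ E → loc e = loc f →
    e = f ∨ Relation.TransGen proc e f ∨ Relation.TransGen proc f e
  /-- `→` is the direct-successor (covering) relation of the order `→⁺` -/
  proc_cover : ∀ e f, proc e f →
    ¬ ∃ g, Relation.TransGen proc e g ∧ Relation.TransGen proc g f
  /-- every event belongs to at most one message edge -/
  msg_once : ∀ e f e' f', msg e f → msg e' f' →
    (e = e' ∨ e = f' ∨ f = e' ∨ f = f') → e = e' ∧ f = f'
  /-- FIFO condition -/
  fifo : ∀ e f e' f', msg e f → msg e' f' → loc e = loc e' → loc f = loc f' →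
    (Relation.ReflTransGen proc e e' ↔ Relation.ReflTransGen proc f f')
  /-- `→ ∪ ◁` is acyclic -/
  acyclic : ∀ e, ¬ Relation.TransGen (fun a b => proc a b ∨ msg a b) e e

namespace MSC

variable {P Lab : Type}

/-- `≤proc`, the reflexive transitive closure of `→`. -/
def procLe (M : MSC P Lab) : ℕ → ℕ → Prop := Relation.ReflTransGen M.proc

/-- `<proc`, the transitive closure of `→`. -/
def procLt (M : MSC P Lab) : ℕ → ℕ → Prop := Relation.TransGen M.proc

/-- the happened-before relation `≤ = (→ ∪ ◁)*`. -/
def hb (M : MSC P Lab) : ℕ → ℕ → Prop :=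
  Relation.ReflTransGen (fun a b => M.proc a b ∨ M.msg a b)

/-- Relabelling an MSC (same events and edges, new labelling). -/
def relabel {Γ : Type} (M : MSC P Lab) (γ : ℕ → Γ) : MSC P Γ where
  E := M.E
  nonemptyE := M.nonemptyE
  proc := M.proc
  msg := M.msg
  loc := M.loc
  lab := γ
  proc_mem := M.proc_mem
  msg_mem := M.msg_mem
  proc_loc := M.proc_loc
  msg_loc := M.msg_loc
  proc_total := M.proc_total
  proc_cover := M.proc_cover
  msg_once := M.msg_once
  fifo := M.fifo
  acyclic := M.acyclic

end MSC

/-! ## Star-free PDL -/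

mutual
/-- Event formulas of star-free PDL. -/
inductive EF (P Lab : Type) : Type where
  | proc : P → EF P Lab
  | lab : Lab → EF P Lab
  | or : EF P Lab → EF P Lab → EF P Lab
  | not : EF P Lab → EF P Lab
  | dia : PF P Lab → EF P Lab → EF P Lab
  | loop : PF P Lab → EF P Lab
/-- Path formulas of star-free PDL. -/
inductive PF (P Lab : Type) : Type where
  | next : PF P Lab
  | prev : PF P Lab
  | msg : P → P → PF P Lab
  | msgInv : P → P → PF P Lab
  | nextG : EF P Lab → PF P Lab
  | prevG : EF P Lab → PF P Lab
  | jump : P → P → PF P Lab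
  | test : EF P Lab → PF P Lab
  | comp : PF P Lab → PF P Lab → PF P Lab
  | union : PF P Lab → PF P Lab → PF P Lab
  | inter : PF P Lab → PF P Lab → PF P Lab
  | compl : PF P Lab → PF P Lab
end

mutual
/-- Satisfaction of event formulas at an event. -/
def EF.sat {P Lab : Type} (M : MSC P Lab) : EF P Lab → ℕ → Prop
  | .proc p, e => e ∈ M.E ∧ M.loc e = p
  | .lab a, e => e ∈ M.E ∧ M.lab e = a
  | .or φ ψ, e => EF.sat M φ e ∨ EF.sat M ψ e
  | .not φ, e => e ∈ M.E ∧ ¬ EF.sat M φ e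
  | .dia π φ, e => ∃ f, PF.sem M π e f ∧ EF.sat M φ f
  | .loop π, e => PF.sem M π e e
/-- Semantics of path formulas as binary relations on events. -/
def PF.sem {P Lab : Type} (M : MSC P Lab) : PF P Lab → ℕ → ℕ → Prop
  | .next, e, f => M.proc e f
  | .prev, e, f => M.proc f e
  | .msg p q, e, f => M.msg e f ∧ M.loc e = p ∧ M.loc f = q
  | .msgInv p q, e, f => M.msg f e ∧ M.loc f = p ∧ M.loc e = q
  | .nextG φ, e, f => M.procLt e f ∧ ∀ g, M.procLt e g → M.procLt g f → EF.sat M φ g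
  | .prevG φ, e, f => M.procLt f e ∧ ∀ g, M.procLt f g → M.procLt g e → EF.sat M φ g
  | .jump p r, e, f => e ∈ M.E ∧ f ∈ M.E ∧ M.loc e = p ∧ M.loc f = r
  | .test φ, e, f => e = f ∧ EF.sat M φ e
  | .comp π₁ π₂, e, f => ∃ g, PF.sem M π₁ e g ∧ PF.sem M π₂ g f
  | .union π₁ π₂, e, f => PF.sem M π₁ e f ∨ PF.sem M π₂ e f
  | .inter π₁ π₂, e, f => PF.sem M π₁ e f ∧ PF.sem M π₂ e f
  | .compl π, e, f => e ∈ M.E ∧ f ∈ M.E ∧ ¬ PF.sem M π e f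
end

/-- Sentences of star-free PDL. -/
inductive PDLS (P Lab : Type) : Type where
  | ex : EF P Lab → PDLS P Lab
  | or : PDLS P Lab → PDLS P Lab → PDLS P Lab
  | not : PDLS P Lab → PDLS P Lab

/-- Satisfaction of PDL sentences. -/
def PDLS.sat {P Lab : Type} (M : MSC P Lab) : PDLS P Lab → Prop
  | .ex φ => ∃ e ∈ M.E, EF.sat M φ e
  | .or ξ ζ => PDLS.sat M ξ ∨ PDLS.sat M ζ
  | .not ξ => ¬ PDLS.sat M ξ

/-- The four optional operators of star-free PDL. -/
inductive PDLOp : Type where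
  | loop | union | inter | compl
deriving DecidableEq

mutual
/-- `EF.inFrag R φ` : the event formula `φ` belongs to the fragment `PDLsf[R]`. -/
def EF.inFrag {P Lab : Type} (R : Set PDLOp) : EF P Lab → Prop
  | .proc _ => True
  | .lab _ => True
  | .or φ ψ => EF.inFrag R φ ∧ EF.inFrag R ψ
  | .not φ => EF.inFrag R φ
  | .dia π φ => PF.inFrag R π ∧ EF.inFrag R φ
  | .loop π => PDLOp.loop ∈ R ∧ PF.inFrag R π
/-- `PF.inFrag R π` : the path formula `π` belongs to the fragment `PDLsf[R]`. -/
def PF.inFrag {P Lab : Type} (R : Set PDLOp) : PF P Lab → Prop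
  | .next => True
  | .prev => True
  | .msg _ _ => True
  | .msgInv _ _ => True
  | .nextG φ => EF.inFrag R φ
  | .prevG φ => EF.inFrag R φ
  | .jump _ _ => True
  | .test φ => EF.inFrag R φ
  | .comp π₁ π₂ => PF.inFrag R π₁ ∧ PF.inFrag R π₂
  | .union π₁ π₂ => PDLOp.union ∈ R ∧ PF.inFrag R π₁ ∧ PF.inFrag R π₂
  | .inter π₁ π₂ => PDLOp.inter ∈ R ∧ PF.inFrag R π₁ ∧ PF.inFrag R π₂
  | .compl π => PDLOp.compl ∈ R ∧ PF.inFrag R π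
end

/-- `PDLS.inFrag R ξ` : the sentence `ξ` belongs to the fragment `PDLsf[R]`. -/
def PDLS.inFrag {P Lab : Type} (R : Set PDLOp) : PDLS P Lab → Prop
  | .ex φ => EF.inFrag R φ
  | .or ξ ζ => PDLS.inFrag R ξ ∧ PDLS.inFrag R ζ
  | .not ξ => PDLS.inFrag R ξ

/-- Conjunction of event formulas (derived operator). -/
def EF.and {P Lab : Type} (φ ψ : EF P Lab) : EF P Lab :=
  .not (.or (.not φ) (.not ψ))

/-- `isMinOf M π e m` : `m` is the `≤proc`-least element of `⟦π⟧_M(e)`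
(in particular `⟦π⟧_M(e)` is nonempty). -/
def isMinOf {P Lab : Type} (M : MSC P Lab) (π : PF P Lab) (e m : ℕ) : Prop :=
  PF.sem M π e m ∧ ∀ f, PF.sem M π e f → M.procLe m f

/-- `isMaxOf M π e m` : `m` is the `≤proc`-greatest element of `⟦π⟧_M(e)`
(in particular `⟦π⟧_M(e)` is nonempty). -/
def isMaxOf {P Lab : Type} (M : MSC P Lab) (π : PF P Lab) (e m : ℕ) : Prop :=
  PF.sem M π e m ∧ ∀ f, PF.sem M π e f → M.procLe f m

/-! ## MSO/FO logic over MSCs -/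

/-- Formulas of MSO over MSCs: first-order kernel with atoms `p(x)`, `a(x)`,
`x = y`, `x → y`, `x ◁ y`, `x ≤ y` and additionally `x ∈ X_k` (monadic
second-order variables, used for the EMSO prefix). -/
inductive FOS (P Lab : Type) : Type where
  | pred : P → ℕ → FOS P Lab
  | lab : Lab → ℕ → FOS P Lab
  | eq : ℕ → ℕ → FOS P Lab
  | edge : ℕ → ℕ → FOS P Lab
  | medge : ℕ → ℕ → FOS P Lab
  | le : ℕ → ℕ → FOS P Lab
  | inSet : ℕ → ℕ → FOS P Lab
  | or : FOS P Lab → FOS P Lab → FOS P Lab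
  | not : FOS P Lab → FOS P Lab
  | ex : ℕ → FOS P Lab → FOS P Lab

/-- Satisfaction, with a first-order valuation `ν` and a second-order valuation `σ`.
First-order quantification ranges over the events of the MSC. -/
def FOS.sat {P Lab : Type} (M : MSC P Lab) : FOS P Lab → (ℕ → ℕ) → (ℕ → Set ℕ) → Prop
  | .pred p x, ν, _ => M.loc (ν x) = p
  | .lab a x, ν, _ => M.lab (ν x) = a
  | .eq x y, ν, _ => ν x = ν y
  | .edge x y, ν, _ => M.proc (ν x) (ν y)
  | .medge x y, ν, _ => M.msg (ν x) (ν y)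
  | .le x y, ν, _ => M.hb (ν x) (ν y)
  | .inSet x k, ν, σ => ν x ∈ σ k
  | .or Φ Ψ, ν, σ => FOS.sat M Φ ν σ ∨ FOS.sat M Ψ ν σ
  | .not Φ, ν, σ => ¬ FOS.sat M Φ ν σ
  | .ex x Φ, ν, σ => ∃ e ∈ M.E, FOS.sat M Φ (Function.update ν x e) σ

/-- Free first-order variables. -/
def FOS.free {P Lab : Type} : FOS P Lab → Finset ℕ
  | .pred _ x => {x}
  | .lab _ x => {x}
  | .eq x y => {x, y}
  | .edge x y => {x, y}
  | .medge x y => {x, y}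
  | .le x y => {x, y}
  | .inSet x _ => {x}
  | .or Φ Ψ => FOS.free Φ ∪ FOS.free Ψ
  | .not Φ => FOS.free Φ
  | .ex x Φ => (FOS.free Φ).erase x

/-- All first-order variables occurring (free or bound). -/
def FOS.vars {P Lab : Type} : FOS P Lab → Finset ℕ
  | .pred _ x => {x}
  | .lab _ x => {x}
  | .eq x y => {x, y}
  | .edge x y => {x, y}
  | .medge x y => {x, y}
  | .le x y => {x, y}
  | .inSet x _ => {x}
  | .or Φ Ψ => FOS.vars Φ ∪ FOS.vars Ψ
  | .not Φ => FOS.vars Φ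
  | .ex x Φ => insert x (FOS.vars Φ)

/-- A formula is first-order (`FO[→,◁,≤]`) iff it contains no set atoms. -/
def FOS.noSets {P Lab : Type} : FOS P Lab → Prop
  | .pred _ _ => True
  | .lab _ _ => True
  | .eq _ _ => True
  | .edge _ _ => True
  | .medge _ _ => True
  | .le _ _ => True
  | .inSet _ _ => False
  | .or Φ Ψ => FOS.noSets Φ ∧ FOS.noSets Ψ
  | .not Φ => FOS.noSets Φ
  | .ex _ Φ => FOS.noSets Φ

/-! ## Communicating finite-state machines -/

/-- Actions of a process: internal `⟨a⟩`, send `!(a,m,q)`, receive `?(a,m,q)`. -/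
inductive CAct (P Lab Msg : Type) : Type where
  | int : Lab → CAct P Lab Msg
  | snd : Lab → Msg → P → CAct P Lab Msg
  | rcv : Lab → Msg → P → CAct P Lab Msg

/-- The label performed by an action. -/
def CAct.label {P Lab Msg : Type} : CAct P Lab Msg → Lab
  | .int a => a
  | .snd a _ _ => a
  | .rcv a _ _ => a

/-- A communicating finite-state machine over `P` and `Lab`. -/
structure CFM (P Lab : Type) where
  /-- states -/
  S : Type
  finS : Fintype S
  /-- messages -/
  Msg : Type
  finMsg : Fintype Msg
  /-- initial state of each process -/
  ι : P → S
  /-- transition relation of each process -/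
  Δ : P → S → CAct P Lab Msg → S → Prop
  Δ_snd : ∀ p s a m q s', Δ p s (.snd a m q) s' → q ≠ p
  Δ_rcv : ∀ p s a m q s', Δ p s (.rcv a m q) s' → q ≠ p
  /-- acceptance condition -/
  Acc : (P → S) → Prop

/-- Existence of an accepting run of a CFM on an MSC. -/
def CFM.Accepts {P Lab : Type} (A : CFM P Lab) (M : MSC P Lab) : Prop :=
  ∃ (src tgt : ℕ → A.S) (act : ℕ → CAct P Lab A.Msg),
    (∀ e ∈ M.E, A.Δ (M.loc e) (src e) (act e) (tgt e)) ∧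
    (∀ e ∈ M.E, (act e).label = M.lab e) ∧
    (∀ e ∈ M.E, (¬ ∃ f, M.proc f e) → src e = A.ι (M.loc e)) ∧
    (∀ e f, M.proc e f → tgt e = src f) ∧
    (∀ e ∈ M.E, (¬ ∃ f, M.msg e f) → (¬ ∃ f, M.msg f e) → ∃ a, act e = .int a) ∧
    (∀ e f, M.msg e f →
      ∃ a a' m, act e = .snd a m (M.loc f) ∧ act f = .rcv a' m (M.loc e)) ∧
    (∃ fin : P → A.S,
      (∀ p, (∀ e ∈ M.E, M.loc e ≠ p) → fin p = A.ι p) ∧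
      (∀ e ∈ M.E, (¬ ∃ f, M.proc e f) → fin (M.loc e) = tgt e) ∧
      A.Acc fin)

/-- The language of a CFM. -/
def CFM.lang {P Lab : Type} (A : CFM P Lab) : Set (MSC P Lab) := {M | A.Accepts M}

/-! ## Letter-to-letter MSC transducers -/

/-- The relation accepted by a letter-to-letter MSC transducer from `Lab` to `Γ`,
i.e., a CFM over `P` and `Lab × Γ`. -/
def Ltrans {P Lab Γ : Type} (A : CFM P (Lab × Γ)) (M : MSC P Lab) (N : MSC P Γ) : Prop :=
  ∃ γ : ℕ → Γ, N = M.relabel γ ∧ A.Accepts (M.relabel fun e => (M.lab e, γ e))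

/-- `M_φ` : the MSC over `Bool` obtained from `M` by labelling each event with
the truth value of the event formula `φ`. -/
noncomputable def MSC.evalEF {P Lab : Type} (M : MSC P Lab) (φ : EF P Lab) : MSC P Bool :=
  M.relabel fun e => @ite Bool (EF.sat M φ e) (Classical.propDecidable _) true false

/-! ## Boolean combinations -/

/-- Boolean combinations over atoms of type `α`. -/
inductive BC (α : Type) : Type where
  | atom : α → BC α
  | or : BC α → BC α → BC α
  | not : BC α → BC α

/-- Evaluation of a boolean combination given truth values of the atoms. -/
def BC.eval {α : Type} (v : α → Prop) : BC α → Prop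
  | .atom a => v a
  | .or b c => BC.eval v b ∨ BC.eval v c
  | .not b => ¬ BC.eval v b

/-- The atoms occurring in a boolean combination. -/
def BC.atoms {α : Type} : BC α → Set α
  | .atom a => {a}
  | .or b c => BC.atoms b ∪ BC.atoms c
  | .not b => BC.atoms b

/-! ## Bounded MSCs -/

/-- `r` is a linearization of `M`: a total order on the events containing
the happened-before relation. -/
def IsLinearization {P Lab : Type} (M : MSC P Lab) (r : ℕ → ℕ → Prop) : Prop :=
  (∀ e ∈ M.E, r e e) ∧
  (∀ e ∈ M.E, ∀ f ∈ M.E, r e f → r f e → e = f) ∧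
  (∀ e ∈ M.E, ∀ f ∈ M.E, ∀ g ∈ M.E, r e f → r f g → r e g) ∧
  (∀ e ∈ M.E, ∀ f ∈ M.E, r e f ∨ r f e) ∧
  (∀ e ∈ M.E, ∀ f ∈ M.E, M.hb e f → r e f)

/-- `r` is a `B`-bounded linearization of `M`: at any point, each channel
contains at most `B` pending messages. -/
def IsBBoundedLin {P Lab : Type} (M : MSC P Lab) (r : ℕ → ℕ → Prop) (B : ℕ) : Prop :=
  IsLinearization M r ∧
  ∀ g ∈ M.E, ∀ p q : P, p ≠ q →
    Set.ncard {ef : ℕ × ℕ | M.msg ef.1 ef.2 ∧ M.loc ef.1 = p ∧ M.loc ef.2 = q ∧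
      r ef.1 g ∧ ¬ r ef.2 g} ≤ B

/-- `M` is `∃B`-bounded: some linearization of `M` is `B`-bounded. -/
def ExistsBBounded {P Lab : Type} (M : MSC P Lab) (B : ℕ) : Prop :=
  ∃ r : ℕ → ℕ → Prop, IsBBoundedLin M r B

/-- `g` is a send event on channel `(p,q)`. -/
def isSendOn {P Lab : Type} (M : MSC P Lab) (p q : P) (g : ℕ) : Prop :=
  M.loc g = p ∧ ∃ h, M.msg g h ∧ M.loc h = q

/-- `revB M B f g` : `f` is a receive event with matching send `e` on some
channel `(p,q)`, and `g` is the `B`-th send on channel `(p,q)` strictly after `e`. -/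
def revB {P Lab : Type} (M : MSC P Lab) (B : ℕ) (f g : ℕ) : Prop :=
  ∃ e, M.msg e f ∧ isSendOn M (M.loc e) (M.loc f) g ∧ M.procLt e g ∧
    Set.ncard {g' | isSendOn M (M.loc e) (M.loc f) g' ∧ M.procLt e g' ∧ M.procLe g' g} = B

/-- `≤_B = (≤ ∪ rev_B)*`. -/
def leB {P Lab : Type} (M : MSC P Lab) (B : ℕ) : ℕ → ℕ → Prop :=
  Relation.ReflTransGen (fun a b => (M.proc a b ∨ M.msg a b) ∨ revB M B a b)

/-- `<_B`, the strict part of `≤_B`. -/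
def ltB {P Lab : Type} (M : MSC P Lab) (B : ℕ) (e f : ℕ) : Prop :=
  leB M B e f ∧ ¬ leB M B f e

/-- `e ∥_B f` : incomparable w.r.t. `≤_B`. -/
def parB {P Lab : Type} (M : MSC P Lab) (B : ℕ) (e f : ℕ) : Prop :=
  ¬ leB M B e f ∧ ¬ leB M B f e

/-- `↑_B e = {g : e ≤_B g}`. -/
def upB {P Lab : Type} (M : MSC P Lab) (B : ℕ) (e : ℕ) : Set ℕ :=
  {g | leB M B e g}

/-- The order `≺_B` (w.r.t. a fixed total order on `P`): `e ≺_B f` iff `e <_B f`, or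
`e ∥_B f` and the `⊑`-minimum of `loc(↑_B e \ ↑_B f)` is strictly below the
`⊑`-minimum of `loc(↑_B f \ ↑_B e)`. -/
def precB {P Lab : Type} [LinearOrder P] (M : MSC P Lab) (B : ℕ) (e f : ℕ) : Prop :=
  ltB M B e f ∨
    (parB M B e f ∧ ∃ p ∈ M.loc '' (upB M B e \ upB M B f),
      ∀ q ∈ M.loc '' (upB M B f \ upB M B e), p < q)

/-! For a path formula `π` without `∪`, `∩`, `ᶜ`, we define `min_{π·ψ?}` by recursion on `π`,
carrying an event formula `ψ` as a filter. The atoms `→`, `←`, `◁`, `◁⁻¹`, `φ?` are partial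
functions. The images of `jump`, `→_φ`, `←_φ` are intervals of one process, and their least
`ψ`-element is the `ψ`-element with no `ψ`-element of the image before it, which PDLsf can say.
For `π₁·π₂` the minimum is reached through the least `π₁`-successor satisfying `⟨π₂⟩ψ`. This is
correct because `e ↦ min_{π₂·ψ?}(e)` is `≤proc`-monotone, which comes from FIFO and the
direct-successor structure of processes. The maximum is the minimum in the reversed MSC. -/

open Relation

theorem Finset.exists_rel_forall_of_total {α : Type*} {r : α → α → Prop}
    (hrefl : ∀ a, r a a) (htrans : ∀ a b c, r a b → r b c → r a c) {s : Finset α}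
    (hs : s.Nonempty) (htot : ∀ a ∈ s, ∀ b ∈ s, r a b ∨ r b a) :
    ∃ m ∈ s, ∀ x ∈ s, r m x := by
  classical
  induction s using Finset.induction_on with
  | empty => exact absurd hs Finset.not_nonempty_empty
  | insert a s _ ih =>
    rcases s.eq_empty_or_nonempty with rfl | hs'
    · exact ⟨a, by simp, by simp [hrefl]⟩
    obtain ⟨m, hm, hmin⟩ := ih hs' fun x hx y hy =>
      htot x (Finset.mem_insert_of_mem hx) y (Finset.mem_insert_of_mem hy)
    rcases htot a (Finset.mem_insert_self a s) m (Finset.mem_insert_of_mem hm) with ham | hma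
    · refine ⟨a, Finset.mem_insert_self a s, fun x hx => ?_⟩
      rcases Finset.mem_insert.1 hx with rfl | hx
      exacts [hrefl x, htrans _ _ _ ham (hmin x hx)]
    · refine ⟨m, Finset.mem_insert_of_mem hm, fun x hx => ?_⟩
      rcases Finset.mem_insert.1 hx with rfl | hx
      exacts [hma, hmin x hx]

namespace MSC

variable {P Lab : Type} {M : MSC P Lab} {e f g : ℕ}

theorem procLe_refl (M : MSC P Lab) (e : ℕ) : M.procLe e e := ReflTransGen.refl

theorem procLe_trans (h₁ : M.procLe e f) (h₂ : M.procLe f g) : M.procLe e g := h₁.trans h₂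

theorem procLe_of_procLt (h : M.procLt e f) : M.procLe e f := h.to_reflTransGen

theorem procLe_of_proc (h : M.proc e f) : M.procLe e f := ReflTransGen.single h

theorem procLt_of_procLt_of_procLe (h₁ : M.procLt e f) (h₂ : M.procLe f g) : M.procLt e g :=
  h₁.trans_left h₂

theorem procLt_of_procLe_of_procLt (h₁ : M.procLe e f) (h₂ : M.procLt f g) : M.procLt e g :=
  h₂.trans_right h₁

theorem procLt_irrefl (M : MSC P Lab) (e : ℕ) : ¬ M.procLt e e := fun h =>
  M.acyclic e (TransGen.mono (fun _ _ => Or.inl) _ _ h)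

theorem not_procLt_of_procLe (h : M.procLe e f) : ¬ M.procLt f e := fun h' =>
  M.procLt_irrefl e (procLt_of_procLe_of_procLt h h')

theorem procLe_antisymm (h₁ : M.procLe e f) (h₂ : M.procLe f e) : e = f := by
  rcases reflTransGen_iff_eq_or_transGen.1 h₂ with h | h
  · exact h
  · exact absurd h (not_procLt_of_procLe h₁)

theorem mem_E_of_procLt (h : M.procLt e f) : e ∈ M.E ∧ f ∈ M.E := by
  obtain ⟨g, hg, -⟩ := TransGen.head'_iff.1 h
  obtain ⟨g', -, hg'⟩ := TransGen.tail'_iff.1 h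
  exact ⟨(M.proc_mem _ _ hg).1, (M.proc_mem _ _ hg').2⟩

theorem loc_eq_of_procLe (h : M.procLe e f) : M.loc e = M.loc f := by
  induction h with
  | refl => rfl
  | tail _ hproc ih => exact ih.trans (M.proc_loc _ _ hproc)

theorem loc_eq_of_procLt (h : M.procLt e f) : M.loc e = M.loc f :=
  loc_eq_of_procLe (procLe_of_procLt h)

theorem procLe_or_procLt (he : e ∈ M.E) (hf : f ∈ M.E) (hl : M.loc e = M.loc f) :
    M.procLe e f ∨ M.procLt f e := by
  rcases M.proc_total e f he hf hl with rfl | h | h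
  exacts [Or.inl (M.procLe_refl e), Or.inl (procLe_of_procLt h), Or.inr h]

theorem procLe_total (he : e ∈ M.E) (hf : f ∈ M.E) (hl : M.loc e = M.loc f) :
    M.procLe e f ∨ M.procLe f e :=
  (procLe_or_procLt he hf hl).imp_right procLe_of_procLt

theorem proc_right_unique (h₁ : M.proc e f) (h₂ : M.proc e g) : f = g := by
  have hl := (M.proc_loc _ _ h₁).symm.trans (M.proc_loc _ _ h₂)
  rcases M.proc_total f g (M.proc_mem _ _ h₁).2 (M.proc_mem _ _ h₂).2 hl with h | h | h
  · exact h
  · exact absurd ⟨f, TransGen.single h₁, h⟩ (M.proc_cover e g h₂)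
  · exact absurd ⟨g, TransGen.single h₂, h⟩ (M.proc_cover e f h₁)

theorem proc_left_unique (h₁ : M.proc e g) (h₂ : M.proc f g) : e = f := by
  have hl := (M.proc_loc _ _ h₁).trans (M.proc_loc _ _ h₂).symm
  rcases M.proc_total e f (M.proc_mem _ _ h₁).1 (M.proc_mem _ _ h₂).1 hl with h | h | h
  · exact h
  · exact absurd ⟨f, h, TransGen.single h₂⟩ (M.proc_cover e g h₁)
  · exact absurd ⟨e, h, TransGen.single h₁⟩ (M.proc_cover f g h₂)

theorem procLe_of_proc_of_procLt (h₁ : M.proc e g) (h₂ : M.procLt e f) : M.procLe g f := by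
  obtain ⟨g', hg', hg'f⟩ := TransGen.head'_iff.1 h₂
  rwa [proc_right_unique h₁ hg']

theorem procLe_of_procLt_of_proc (h₁ : M.procLt e f) (h₂ : M.proc g f) : M.procLe e g := by
  obtain ⟨g', heg', hg'⟩ := TransGen.tail'_iff.1 h₁
  rwa [proc_left_unique h₂ hg']

def reverse (M : MSC P Lab) : MSC P Lab where
  E := M.E
  nonemptyE := M.nonemptyE
  proc := Function.swap M.proc
  msg := Function.swap M.msg
  loc := M.loc
  lab := M.lab
  proc_mem e f h := (M.proc_mem f e h).symm
  msg_mem e f h := (M.msg_mem f e h).symm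
  proc_loc e f h := (M.proc_loc f e h).symm
  msg_loc e f h := (M.msg_loc f e h).symm
  proc_total e f he hf hl := by
    rcases M.proc_total e f he hf hl with h | h | h
    exacts [Or.inl h, Or.inr (Or.inr (transGen_swap.2 h)), Or.inr (Or.inl (transGen_swap.2 h))]
  proc_cover e f h := fun ⟨g, hg, hg'⟩ =>
    M.proc_cover f e h ⟨g, transGen_swap.1 hg', transGen_swap.1 hg⟩
  msg_once e f e' f' h h' hd := (M.msg_once f e f' e' h h' (by tauto)).symm
  fifo e f e' f' h h' hle hlf :=
    reflTransGen_swap.trans ((M.fifo f' e' f e h' h hlf.symm hle.symm).symm.trans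
      reflTransGen_swap.symm)
  acyclic e h := M.acyclic e (transGen_swap.1 h)

theorem procLe_reverse : M.reverse.procLe e f ↔ M.procLe f e := reflTransGen_swap

theorem procLt_reverse : M.reverse.procLt e f ↔ M.procLt f e := transGen_swap

end MSC

variable {P Lab : Type}

mutual

theorem EF.mem_E_of_sat {M : MSC P Lab} : ∀ {φ : EF P Lab} {e : ℕ}, EF.sat M φ e → e ∈ M.E
  | .proc _, _, h => h.1
  | .lab _, _, h => h.1
  | .or _ _, _, h => h.elim EF.mem_E_of_sat EF.mem_E_of_sat
  | .not _, _, h => h.1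
  | .dia _ _, _, ⟨_, h, _⟩ => (PF.mem_E_of_sem h).1
  | .loop _, _, h => (PF.mem_E_of_sem h).1

theorem PF.mem_E_of_sem {M : MSC P Lab} :
    ∀ {π : PF P Lab} {e f : ℕ}, PF.sem M π e f → e ∈ M.E ∧ f ∈ M.E
  | .next, _, _, h => M.proc_mem _ _ h
  | .prev, _, _, h => (M.proc_mem _ _ h).symm
  | .msg _ _, _, _, h => M.msg_mem _ _ h.1
  | .msgInv _ _, _, _, h => (M.msg_mem _ _ h.1).symm
  | .nextG _, _, _, h => MSC.mem_E_of_procLt h.1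
  | .prevG _, _, _, h => (MSC.mem_E_of_procLt h.1).symm
  | .jump _ _, _, _, h => ⟨h.1, h.2.1⟩
  | .test _, _, _, ⟨rfl, h⟩ => ⟨EF.mem_E_of_sat h, EF.mem_E_of_sat h⟩
  | .comp _ _, _, _, ⟨_, h₁, h₂⟩ => ⟨(PF.mem_E_of_sem h₁).1, (PF.mem_E_of_sem h₂).2⟩
  | .union _ _, _, _, h => h.elim PF.mem_E_of_sem PF.mem_E_of_sem
  | .inter _ _, _, _, h => PF.mem_E_of_sem h.1
  | .compl _, _, _, h => ⟨h.1, h.2.1⟩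

end

noncomputable def EF.top [Nonempty Lab] : EF P Lab :=
  .or (.lab (Classical.arbitrary Lab)) (.not (.lab (Classical.arbitrary Lab)))

section Semantics

variable {M : MSC P Lab} {φ ψ : EF P Lab} {π : PF P Lab} {e f : ℕ}

theorem EF.sat_top [Nonempty Lab] : EF.sat M EF.top e ↔ e ∈ M.E := by
  refine ⟨EF.mem_E_of_sat, fun he => ?_⟩
  by_cases hl : M.lab e = Classical.arbitrary Lab
  exacts [Or.inl ⟨he, hl⟩, Or.inr ⟨he, fun h => hl h.2⟩]

theorem EF.inFrag_top [Nonempty Lab] {R : Set PDLOp} : EF.inFrag R (EF.top : EF P Lab) :=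
  ⟨trivial, trivial⟩

theorem EF.sat_not : EF.sat M (.not φ) e ↔ e ∈ M.E ∧ ¬ EF.sat M φ e := Iff.rfl

theorem EF.sat_and : EF.sat M (φ.and ψ) e ↔ e ∈ M.E ∧ EF.sat M φ e ∧ EF.sat M ψ e := by
  simp only [EF.and, EF.sat]
  tauto

theorem PF.sem_comp_test :
    PF.sem M (π.comp (.test ψ)) e f ↔ PF.sem M π e f ∧ EF.sat M ψ f :=
  ⟨fun ⟨_, h, rfl, hψ⟩ => ⟨h, hψ⟩, fun ⟨h, hψ⟩ => ⟨f, h, rfl, hψ⟩⟩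

theorem PF.sem_comp_test_top [Nonempty Lab] :
    PF.sem M (π.comp (.test EF.top)) e f ↔ PF.sem M π e f := by
  rw [PF.sem_comp_test, EF.sat_top]
  exact and_iff_left_of_imp fun h => (PF.mem_E_of_sem h).2

theorem EF.sat_dia_prevG_top [Nonempty Lab] :
    EF.sat M (.dia (.prevG EF.top) ψ) f ↔ ∃ g, M.procLt g f ∧ EF.sat M ψ g := by
  simp only [EF.sat, PF.sem, EF.sat_top]
  exact exists_congr fun g => and_congr_left fun _ =>
    and_iff_left_of_imp fun _ k hk _ => (MSC.mem_E_of_procLt hk).2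

end Semantics

mutual

def EF.reverse : EF P Lab → EF P Lab
  | .proc p => .proc p
  | .lab a => .lab a
  | .or φ ψ => .or φ.reverse ψ.reverse
  | .not φ => .not φ.reverse
  | .dia π φ => .dia π.reverse φ.reverse
  | .loop π => .loop π.reverse

def PF.reverse : PF P Lab → PF P Lab
  | .next => .prev
  | .prev => .next
  | .msg p q => .msgInv q p
  | .msgInv p q => .msg q p
  | .nextG φ => .prevG φ.reverse
  | .prevG φ => .nextG φ.reverse
  | .jump p r => .jump p r
  | .test φ => .test φ.reverse
  | .comp π₁ π₂ => .comp π₁.reverse π₂.reverse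
  | .union π₁ π₂ => .union π₁.reverse π₂.reverse
  | .inter π₁ π₂ => .inter π₁.reverse π₂.reverse
  | .compl π => .compl π.reverse

end

mutual

theorem EF.reverse_reverse : ∀ φ : EF P Lab, φ.reverse.reverse = φ
  | .proc _ | .lab _ => rfl
  | .or φ ψ => by simp only [EF.reverse, EF.reverse_reverse φ, EF.reverse_reverse ψ]
  | .not φ => by simp only [EF.reverse, EF.reverse_reverse φ]
  | .dia π φ => by simp only [EF.reverse, PF.reverse_reverse π, EF.reverse_reverse φ]
  | .loop π => by simp only [EF.reverse, PF.reverse_reverse π]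

theorem PF.reverse_reverse : ∀ π : PF P Lab, π.reverse.reverse = π
  | .next | .prev | .msg _ _ | .msgInv _ _ | .jump _ _ => rfl
  | .nextG φ | .prevG φ | .test φ => by simp only [PF.reverse, EF.reverse_reverse φ]
  | .comp π₁ π₂ | .union π₁ π₂ | .inter π₁ π₂ => by
      simp only [PF.reverse, PF.reverse_reverse π₁, PF.reverse_reverse π₂]
  | .compl π => by simp only [PF.reverse, PF.reverse_reverse π]

end

mutual

theorem EF.inFrag_reverse {R : Set PDLOp} :
    ∀ {φ : EF P Lab}, EF.inFrag R φ → EF.inFrag R φ.reverse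
  | .proc _, h | .lab _, h => h
  | .or _ _, h => ⟨EF.inFrag_reverse h.1, EF.inFrag_reverse h.2⟩
  | .not φ, h => EF.inFrag_reverse (φ := φ) h
  | .dia _ _, h => ⟨PF.inFrag_reverse h.1, EF.inFrag_reverse h.2⟩
  | .loop _, h => ⟨h.1, PF.inFrag_reverse h.2⟩

theorem PF.inFrag_reverse {R : Set PDLOp} :
    ∀ {π : PF P Lab}, PF.inFrag R π → PF.inFrag R π.reverse
  | .next, h | .prev, h | .msg _ _, h | .msgInv _ _, h | .jump _ _, h => h
  | .nextG φ, h | .prevG φ, h | .test φ, h => EF.inFrag_reverse (φ := φ) h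
  | .comp _ _, h => ⟨PF.inFrag_reverse h.1, PF.inFrag_reverse h.2⟩
  | .union _ _, h | .inter _ _, h => ⟨h.1, PF.inFrag_reverse h.2.1, PF.inFrag_reverse h.2.2⟩
  | .compl _, h => ⟨h.1, PF.inFrag_reverse h.2⟩

end

mutual

theorem EF.sat_reverse (M : MSC P Lab) :
    ∀ (φ : EF P Lab) (e : ℕ), EF.sat M.reverse φ e ↔ EF.sat M φ.reverse e
  | .proc _, _ | .lab _, _ => Iff.rfl
  | .or φ ψ, e => or_congr (EF.sat_reverse M φ e) (EF.sat_reverse M ψ e)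
  | .not φ, e => and_congr Iff.rfl (not_congr (EF.sat_reverse M φ e))
  | .dia π φ, e =>
      exists_congr fun f => and_congr (PF.sem_reverse M π e f) (EF.sat_reverse M φ f)
  | .loop π, e => PF.sem_reverse M π e e

theorem PF.sem_reverse (M : MSC P Lab) :
    ∀ (π : PF P Lab) (e f : ℕ), PF.sem M.reverse π e f ↔ PF.sem M π.reverse e f
  | .next, _, _ | .prev, _, _ | .jump _ _, _, _ => Iff.rfl
  | .msg _ _, _, _ | .msgInv _ _, _, _ => and_congr Iff.rfl and_comm
  | .nextG φ, e, f | .prevG φ, e, f => by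
      simp only [PF.sem, PF.reverse, MSC.procLt_reverse, EF.sat_reverse M φ]
      exact and_congr Iff.rfl (forall_congr' fun _ => forall_comm)
  | .test φ, e, _ => and_congr Iff.rfl (EF.sat_reverse M φ e)
  | .comp π₁ π₂, e, f =>
      exists_congr fun g => and_congr (PF.sem_reverse M π₁ e g) (PF.sem_reverse M π₂ g f)
  | .union π₁ π₂, e, f => or_congr (PF.sem_reverse M π₁ e f) (PF.sem_reverse M π₂ e f)
  | .inter π₁ π₂, e, f => and_congr (PF.sem_reverse M π₁ e f) (PF.sem_reverse M π₂ e f)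
  | .compl π, e, f => and_congr Iff.rfl (and_congr Iff.rfl (not_congr (PF.sem_reverse M π e f)))

end

theorem isMinOf_reverse_iff {M : MSC P Lab} {π : PF P Lab} {e f : ℕ} :
    isMinOf M.reverse π e f ↔ isMaxOf M π.reverse e f := by
  simp only [isMinOf, isMaxOf, PF.sem_reverse, MSC.procLe_reverse]

def PF.BoolFree : PF P Lab → Prop
  | .comp π₁ π₂ => π₁.BoolFree ∧ π₂.BoolFree
  | .union _ _ | .inter _ _ | .compl _ => False
  | _ => True

theorem PF.BoolFree.reverse : ∀ {π : PF P Lab}, π.BoolFree → π.reverse.BoolFree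
  | .next, h | .prev, h | .msg _ _, h | .msgInv _ _, h | .nextG _, h | .prevG _, h
  | .jump _ _, h | .test _, h => h
  | .comp _ _, h => ⟨h.1.reverse, h.2.reverse⟩

theorem PF.boolFree_of_inFrag {R : Set PDLOp} (hR : R ⊆ {PDLOp.loop}) :
    ∀ {π : PF P Lab}, PF.inFrag R π → π.BoolFree
  | .next, _ | .prev, _ | .msg _ _, _ | .msgInv _ _, _ | .nextG _, _ | .prevG _, _
  | .jump _ _, _ | .test _, _ => trivial
  | .comp _ _, h => ⟨boolFree_of_inFrag hR h.1, boolFree_of_inFrag hR h.2⟩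
  | .union _ _, h | .inter _ _, h | .compl _, h => by simpa using hR h.1

theorem PF.BoolFree.loc_eq {M : MSC P Lab} :
    ∀ {π : PF P Lab}, π.BoolFree → ∀ {e e' f f' : ℕ}, PF.sem M π e f → PF.sem M π e' f' →
      M.loc e = M.loc e' → M.loc f = M.loc f'
  | .next, _, _, _, _, _, h, h', hl =>
      (M.proc_loc _ _ h).symm.trans (hl.trans (M.proc_loc _ _ h'))
  | .prev, _, _, _, _, _, h, h', hl => (M.proc_loc _ _ h).trans (hl.trans (M.proc_loc _ _ h').symm)
  | .msg _ _, _, _, _, _, _, h, h', _ => h.2.2.trans h'.2.2.symm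
  | .msgInv _ _, _, _, _, _, _, h, h', _ => h.2.1.trans h'.2.1.symm
  | .nextG _, _, _, _, _, _, h, h', hl =>
      (MSC.loc_eq_of_procLt h.1).symm.trans (hl.trans (MSC.loc_eq_of_procLt h'.1))
  | .prevG _, _, _, _, _, _, h, h', hl =>
      (MSC.loc_eq_of_procLt h.1).trans (hl.trans (MSC.loc_eq_of_procLt h'.1).symm)
  | .jump _ _, _, _, _, _, _, h, h', _ => h.2.2.2.trans h'.2.2.2.symm
  | .test _, _, _, _, _, _, h, h', hl => h.1 ▸ h'.1 ▸ hl
  | .comp _ _, hπ, _, _, _, _, ⟨_, hg, hf⟩, ⟨_, hg', hf'⟩, hl =>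
      hπ.2.loc_eq hf hf' (hπ.1.loc_eq hg hg' hl)

section Minimum

variable {M : MSC P Lab} {π α : PF P Lab} {ψ : EF P Lab} {e f : ℕ}

theorem exists_isMinOf (hπ : π.BoolFree) (h : PF.sem M π e f) : ∃ m, isMinOf M π e m := by
  classical
  obtain ⟨m, hm, hmin⟩ := Finset.exists_rel_forall_of_total (r := M.procLe) (M.procLe_refl)
    (fun _ _ _ => MSC.procLe_trans) (s := M.E.filter (PF.sem M π e))
    ⟨f, Finset.mem_filter.2 ⟨(PF.mem_E_of_sem h).2, h⟩⟩ fun a ha b hb => by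
      rw [Finset.mem_filter] at ha hb
      exact MSC.procLe_total ha.1 hb.1 (hπ.loc_eq ha.2 hb.2 rfl)
  exact ⟨m, (Finset.mem_filter.1 hm).2, fun x hx =>
    hmin x (Finset.mem_filter.2 ⟨(PF.mem_E_of_sem hx).2, hx⟩)⟩

theorem isMinOf.unique {m m' : ℕ} (h : isMinOf M π e m) (h' : isMinOf M π e m') : m = m' :=
  MSC.procLe_antisymm (h.2 m' h'.1) (h'.2 m h.1)

theorem isMinOf_comp_test_top [Nonempty Lab] :
    isMinOf M (π.comp (.test EF.top)) e f ↔ isMinOf M π e f := by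
  simp only [isMinOf, PF.sem_comp_test_top]

def PF.IsFunctional (α : PF P Lab) : Prop :=
  ∀ (M : MSC P Lab) (e f f' : ℕ), PF.sem M α e f → PF.sem M α e f' → f = f'

def PF.IsMonotone (α : PF P Lab) : Prop :=
  ∀ (M : MSC P Lab) (e e' f f' : ℕ), M.procLe e e' →
    PF.sem M α e f → PF.sem M α e' f' → M.procLe f f'

def PF.IsMinMonotone (π : PF P Lab) : Prop :=
  ∀ (M : MSC P Lab) (e e' f f' : ℕ), M.procLe e e' →
    isMinOf M π e f → isMinOf M π e' f' → M.procLe f f'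

theorem PF.IsFunctional.isMinOf_comp_test_iff (hα : α.IsFunctional) :
    isMinOf M (α.comp (.test ψ)) e f ↔ PF.sem M (α.comp (.test ψ)) e f := by
  refine ⟨And.left, fun h => ⟨h, fun f' h' => ?_⟩⟩
  rw [PF.sem_comp_test] at h h'
  rw [hα M e f f' h.1 h'.1]
  exact M.procLe_refl f'

theorem PF.IsMonotone.isMinMonotone_comp_test (hα : α.IsMonotone) :
    (α.comp (.test ψ)).IsMinMonotone := fun M e e' f f' hle h h' =>
  hα M e e' f f' hle (PF.sem_comp_test.1 h.1).1 (PF.sem_comp_test.1 h'.1).1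

end Minimum

section Atoms

open MSC

theorem PF.isFunctional_next : (PF.next : PF P Lab).IsFunctional :=
  fun _ _ _ _ => proc_right_unique

theorem PF.isFunctional_prev : (PF.prev : PF P Lab).IsFunctional :=
  fun _ _ _ _ h h' => proc_left_unique h h'

theorem PF.isFunctional_msg (p q : P) : (PF.msg p q : PF P Lab).IsFunctional :=
  fun M e _ _ h h' => (M.msg_once e _ e _ h.1 h'.1 (Or.inl rfl)).2

theorem PF.isFunctional_msgInv (p q : P) : (PF.msgInv p q : PF P Lab).IsFunctional :=
  fun M e _ _ h h' => (M.msg_once _ e _ e h.1 h'.1 (Or.inr (Or.inr (Or.inr rfl)))).1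

theorem PF.isFunctional_test (φ : EF P Lab) : (PF.test φ).IsFunctional :=
  fun _ _ _ _ h h' => h.1.symm.trans h'.1

theorem PF.isMonotone_next : (PF.next : PF P Lab).IsMonotone := by
  intro M e e' f f' hle h h'
  rcases reflTransGen_iff_eq_or_transGen.1 hle with rfl | hlt
  · rw [proc_right_unique h h']
    exact M.procLe_refl f'
  · exact procLe_trans (procLe_of_proc_of_procLt h hlt) (procLe_of_proc h')

theorem PF.isMonotone_prev : (PF.prev : PF P Lab).IsMonotone := by
  intro M e e' f f' hle h h'
  rcases reflTransGen_iff_eq_or_transGen.1 hle with rfl | hlt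
  · rw [proc_left_unique h h']
    exact M.procLe_refl f'
  · exact procLe_trans (procLe_of_proc h) (procLe_of_procLt_of_proc hlt h')

theorem PF.isMonotone_msg (p q : P) : (PF.msg p q : PF P Lab).IsMonotone :=
  fun M e e' f f' hle h h' =>
    (M.fifo e f e' f' h.1 h'.1 (h.2.1.trans h'.2.1.symm) (h.2.2.trans h'.2.2.symm)).1 hle

theorem PF.isMonotone_msgInv (p q : P) : (PF.msgInv p q : PF P Lab).IsMonotone :=
  fun M e e' f f' hle h h' =>
    (M.fifo f e f' e' h.1 h'.1 (h.2.1.trans h'.2.1.symm) (h.2.2.trans h'.2.2.symm)).2 hle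

theorem PF.isMonotone_test (φ : EF P Lab) : (PF.test φ).IsMonotone :=
  fun _ _ _ _ _ hle h h' => h.1 ▸ h'.1 ▸ hle

theorem PF.isMinMonotone_jump (p r : P) (ψ : EF P Lab) :
    ((PF.jump p r).comp (.test ψ)).IsMinMonotone := by
  intro M e e' f f' _ ⟨hf, hmin⟩ ⟨hf', _⟩
  obtain ⟨⟨he, -, hep, -⟩, -⟩ := PF.sem_comp_test.1 hf
  obtain ⟨⟨-, hf'E, -, hf'r⟩, hψ'⟩ := PF.sem_comp_test.1 hf'
  exact hmin f' (PF.sem_comp_test.2 ⟨⟨he, hf'E, hep, hf'r⟩, hψ'⟩)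

theorem PF.isMinMonotone_nextG (φ ψ : EF P Lab) :
    ((PF.nextG φ).comp (.test ψ)).IsMinMonotone := by
  intro M e e' f f' hle ⟨hf, hmin⟩ ⟨hf', _⟩
  obtain ⟨⟨hef, hφ⟩, -⟩ := PF.sem_comp_test.1 hf
  obtain ⟨⟨he'f', -⟩, hψ'⟩ := PF.sem_comp_test.1 hf'
  have hef' := procLt_of_procLe_of_procLt hle he'f'
  refine (procLe_or_procLt (mem_E_of_procLt hef).2 (mem_E_of_procLt hef').2
    ((loc_eq_of_procLt hef).symm.trans (loc_eq_of_procLt hef'))).elim id fun hlt => ?_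
  refine hmin f' (PF.sem_comp_test.2 ⟨⟨hef', fun g hg hgf' => hφ g hg ?_⟩, hψ'⟩)
  exact hgf'.trans hlt

theorem PF.isMinMonotone_prevG (φ ψ : EF P Lab) :
    ((PF.prevG φ).comp (.test ψ)).IsMinMonotone := by
  intro M e e' f f' hle ⟨hf, hmin⟩ ⟨hf', _⟩
  obtain ⟨⟨hfe, -⟩, -⟩ := PF.sem_comp_test.1 hf
  obtain ⟨⟨hf'e', hφ'⟩, hψ'⟩ := PF.sem_comp_test.1 hf'
  refine (procLe_or_procLt (mem_E_of_procLt hfe).1 (mem_E_of_procLt hf'e').1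
    ((loc_eq_of_procLt hfe).trans ((loc_eq_of_procLe hle).trans
      (loc_eq_of_procLt hf'e').symm))).elim id fun hlt => ?_
  refine hmin f' (PF.sem_comp_test.2 ⟨⟨hlt.trans hfe, fun g hg hge => hφ' g hg ?_⟩, hψ'⟩)
  exact procLt_of_procLt_of_procLe hge hle

end Atoms

/-- Defines `e ↦ min_{π·ψ?}(e)` when `π` is boolean-free; junk on `∪`, `∩`, `ᶜ`. -/
noncomputable def PF.minWith [Nonempty Lab] : PF P Lab → EF P Lab → PF P Lab
  | .jump p r, ψ => (PF.jump p r).comp (.test (ψ.and (.not (.dia (.prevG EF.top) ψ))))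
  | .nextG φ, ψ => (PF.nextG (φ.and (.not ψ))).comp (.test ψ)
  | .prevG φ, ψ => (PF.prevG φ).comp (.test (ψ.and (.not (φ.and (.dia (.prevG φ) ψ)))))
  | .comp π₁ π₂, ψ => (π₁.minWith (.dia π₂ ψ)).comp (π₂.minWith ψ)
  | α, ψ => α.comp (.test ψ)

theorem PF.inFrag_minWith [Nonempty Lab] {R : Set PDLOp} :
    ∀ {π : PF P Lab} {ψ : EF P Lab}, PF.inFrag R π → EF.inFrag R ψ → PF.inFrag R (π.minWith ψ)
  | .next, _, hπ, hψ | .prev, _, hπ, hψ | .msg _ _, _, hπ, hψ | .msgInv _ _, _, hπ, hψ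
  | .test _, _, hπ, hψ | .union _ _, _, hπ, hψ | .inter _ _, _, hπ, hψ
  | .compl _, _, hπ, hψ => ⟨hπ, hψ⟩
  | .jump _ _, _, _, hψ => ⟨trivial, hψ, EF.inFrag_top, hψ⟩
  | .nextG _, _, hπ, hψ => ⟨⟨hπ, hψ⟩, hψ⟩
  | .prevG _, _, hπ, hψ => ⟨hπ, hψ, hπ, hπ, hψ⟩
  | .comp _ _, _, hπ, hψ => ⟨PF.inFrag_minWith hπ.1 ⟨hπ.2, hψ⟩, PF.inFrag_minWith hπ.2 hψ⟩

section MinWith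

open MSC

variable [Nonempty Lab] {M : MSC P Lab} {φ ψ : EF P Lab} {e f : ℕ}

theorem PF.sem_minWith_jump {p r : P} :
    PF.sem M ((PF.jump p r).minWith ψ) e f ↔ isMinOf M ((PF.jump p r).comp (.test ψ)) e f := by
  simp only [PF.minWith, isMinOf, PF.sem_comp_test, EF.sat_and, EF.sat_not,
    EF.sat_dia_prevG_top]
  constructor
  · rintro ⟨hj, -, hψ, -, hfirst⟩
    refine ⟨⟨hj, hψ⟩, fun f' ⟨hj', hψ'⟩ => ?_⟩
    exact (procLe_or_procLt hj.2.1 hj'.2.1 (hj.2.2.2.trans hj'.2.2.2.symm)).resolve_right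
      fun hlt => hfirst ⟨f', hlt, hψ'⟩
  · rintro ⟨⟨hj, hψ⟩, hmin⟩
    refine ⟨hj, hj.2.1, hψ, hj.2.1, fun ⟨g, hgf, hψg⟩ => ?_⟩
    have hj' : PF.sem M (.jump p r) e g :=
      ⟨hj.1, (mem_E_of_procLt hgf).1, hj.2.2.1, (loc_eq_of_procLt hgf).trans hj.2.2.2⟩
    exact not_procLt_of_procLe (hmin g ⟨hj', hψg⟩) hgf

theorem PF.sem_minWith_nextG :
    PF.sem M ((PF.nextG φ).minWith ψ) e f ↔ isMinOf M ((PF.nextG φ).comp (.test ψ)) e f := by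
  simp only [PF.minWith, isMinOf, PF.sem_comp_test]
  constructor
  · rintro ⟨⟨hef, hbetween⟩, hψ⟩
    refine ⟨⟨⟨hef, fun g hg hgf => (EF.sat_and.1 (hbetween g hg hgf)).2.1⟩, hψ⟩,
      fun f' ⟨⟨hef', _⟩, hψ'⟩ => ?_⟩
    refine (procLe_or_procLt (mem_E_of_procLt hef).2 (mem_E_of_procLt hef').2
      ((loc_eq_of_procLt hef).symm.trans (loc_eq_of_procLt hef'))).resolve_right fun hlt => ?_
    exact (EF.sat_and.1 (hbetween f' hef' hlt)).2.2.2 hψ'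
  · rintro ⟨⟨⟨hef, hφ⟩, hψ⟩, hmin⟩
    refine ⟨⟨hef, fun g hg hgf => EF.sat_and.2 ⟨(mem_E_of_procLt hg).2, hφ g hg hgf,
      (mem_E_of_procLt hg).2, fun hψg => ?_⟩⟩, hψ⟩
    have hg' : PF.sem M (.nextG φ) e g := ⟨hg, fun k hk hkg => hφ k hk (hkg.trans hgf)⟩
    exact not_procLt_of_procLe (hmin g ⟨hg', hψg⟩) hgf

theorem PF.sem_minWith_prevG :
    PF.sem M ((PF.prevG φ).minWith ψ) e f ↔ isMinOf M ((PF.prevG φ).comp (.test ψ)) e f := by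
  simp only [PF.minWith, isMinOf, PF.sem_comp_test, EF.sat_and, EF.sat_not]
  constructor
  · rintro ⟨⟨hfe, hφ⟩, -, hψ, -, hfirst⟩
    refine ⟨⟨⟨hfe, hφ⟩, hψ⟩, fun f' ⟨⟨hf'e, hφ'⟩, hψ'⟩ => ?_⟩
    refine (procLe_or_procLt (mem_E_of_procLt hfe).1 (mem_E_of_procLt hf'e).1
      ((loc_eq_of_procLt hfe).trans (loc_eq_of_procLt hf'e).symm)).resolve_right fun hlt => ?_
    exact hfirst ⟨(mem_E_of_procLt hfe).1, hφ' f hlt hfe,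
      f', ⟨hlt, fun g hg hgf => hφ' g hg (hgf.trans hfe)⟩, hψ'⟩
  · rintro ⟨⟨⟨hfe, hφ⟩, hψ⟩, hmin⟩
    have hfE := (mem_E_of_procLt hfe).1
    refine ⟨⟨hfe, hφ⟩, hfE, hψ, hfE, fun ⟨_, hφf, h, ⟨hhf, hφh⟩, hψh⟩ => ?_⟩
    have hh : PF.sem M (.prevG φ) e h := by
      refine ⟨hhf.trans hfe, fun g hhg hge => ?_⟩
      rcases M.proc_total g f (mem_E_of_procLt hhg).2 hfE
        ((loc_eq_of_procLt hhg).symm.trans (loc_eq_of_procLt hhf)) with rfl | hgf | hfg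
      exacts [hφf, hφh g hhg hgf, hφ g hfg hge]
    exact not_procLt_of_procLe (hmin h ⟨hh, hψh⟩) hhf

end MinWith

section Composition

variable {M : MSC P Lab} {π₁ π₂ : PF P Lab} {ψ : EF P Lab} {e f : ℕ}

theorem isMinOf_comp_of_isMinOf (h₂ : π₂.BoolFree) (hmono : (π₂.comp (.test ψ)).IsMinMonotone)
    {g : ℕ} (hg : isMinOf M (π₁.comp (.test (.dia π₂ ψ))) e g)
    (hf : isMinOf M (π₂.comp (.test ψ)) g f) :
    isMinOf M ((π₁.comp π₂).comp (.test ψ)) e f := by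
  obtain ⟨hg₁, -⟩ := PF.sem_comp_test.1 hg.1
  obtain ⟨hf₂, hψ⟩ := PF.sem_comp_test.1 hf.1
  refine ⟨PF.sem_comp_test.2 ⟨⟨g, hg₁, hf₂⟩, hψ⟩, fun f' hf' => ?_⟩
  obtain ⟨⟨g', hg'₁, hf'₂⟩, hψ'⟩ := PF.sem_comp_test.1 hf'
  have hgg' : M.procLe g g' := hg.2 g' (PF.sem_comp_test.2 ⟨hg'₁, f', hf'₂, hψ'⟩)
  obtain ⟨m', hm'⟩ := exists_isMinOf (π := π₂.comp (.test ψ)) ⟨h₂, trivial⟩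
    (PF.sem_comp_test.2 ⟨hf'₂, hψ'⟩)
  exact MSC.procLe_trans (hmono M g g' f m' hgg' hf hm') (hm'.2 f' (PF.sem_comp_test.2 ⟨hf'₂, hψ'⟩))

theorem isMinOf_comp_comp_test_iff (h₁ : π₁.BoolFree) (h₂ : π₂.BoolFree)
    (hmono : (π₂.comp (.test ψ)).IsMinMonotone) :
    isMinOf M ((π₁.comp π₂).comp (.test ψ)) e f ↔
      ∃ g, isMinOf M (π₁.comp (.test (.dia π₂ ψ))) e g ∧ isMinOf M (π₂.comp (.test ψ)) g f := by
  refine ⟨fun h => ?_, fun ⟨g, hg, hf⟩ => isMinOf_comp_of_isMinOf h₂ hmono hg hf⟩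
  obtain ⟨⟨g, hg, hgf⟩, hψ⟩ := PF.sem_comp_test.1 h.1
  obtain ⟨g₀, hg₀⟩ := exists_isMinOf (π := π₁.comp (.test (.dia π₂ ψ))) ⟨h₁, trivial⟩
    (PF.sem_comp_test.2 ⟨hg, f, hgf, hψ⟩)
  obtain ⟨f₁, hf₁, hψ₁⟩ := (PF.sem_comp_test.1 hg₀.1).2
  obtain ⟨f₀, hf₀⟩ := exists_isMinOf (π := π₂.comp (.test ψ)) ⟨h₂, trivial⟩
    (PF.sem_comp_test.2 ⟨hf₁, hψ₁⟩)
  rw [h.unique (isMinOf_comp_of_isMinOf h₂ hmono hg₀ hf₀)]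
  exact ⟨g₀, hg₀, hf₀⟩

end Composition

theorem PF.BoolFree.isMinMonotone_comp_test :
    ∀ {π : PF P Lab}, π.BoolFree → ∀ ψ : EF P Lab, (π.comp (.test ψ)).IsMinMonotone
  | .next, _, _ => PF.isMonotone_next.isMinMonotone_comp_test
  | .prev, _, _ => PF.isMonotone_prev.isMinMonotone_comp_test
  | .msg p q, _, _ => (PF.isMonotone_msg p q).isMinMonotone_comp_test
  | .msgInv p q, _, _ => (PF.isMonotone_msgInv p q).isMinMonotone_comp_test
  | .test φ, _, _ => (PF.isMonotone_test φ).isMinMonotone_comp_test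
  | .jump p r, _, ψ => PF.isMinMonotone_jump p r ψ
  | .nextG φ, _, ψ => PF.isMinMonotone_nextG φ ψ
  | .prevG φ, _, ψ => PF.isMinMonotone_prevG φ ψ
  | .comp π₁ π₂, hπ, ψ => fun M e e' f f' hle h h' => by
      have hmono₂ := hπ.2.isMinMonotone_comp_test ψ
      obtain ⟨g, hg, hf⟩ := (isMinOf_comp_comp_test_iff hπ.1 hπ.2 hmono₂).1 h
      obtain ⟨g', hg', hf'⟩ := (isMinOf_comp_comp_test_iff hπ.1 hπ.2 hmono₂).1 h'
      exact hmono₂ M g g' f f' (hπ.1.isMinMonotone_comp_test _ M e e' g g' hle hg hg') hf hf'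

theorem PF.BoolFree.sem_minWith [Nonempty Lab] {M : MSC P Lab} :
    ∀ {π : PF P Lab}, π.BoolFree → ∀ {ψ : EF P Lab} {e f : ℕ},
      PF.sem M (π.minWith ψ) e f ↔ isMinOf M (π.comp (.test ψ)) e f
  | .next, _, _, _, _ => PF.isFunctional_next.isMinOf_comp_test_iff.symm
  | .prev, _, _, _, _ => PF.isFunctional_prev.isMinOf_comp_test_iff.symm
  | .msg p q, _, _, _, _ => (PF.isFunctional_msg p q).isMinOf_comp_test_iff.symm
  | .msgInv p q, _, _, _, _ => (PF.isFunctional_msgInv p q).isMinOf_comp_test_iff.symm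
  | .test φ, _, _, _, _ => (PF.isFunctional_test φ).isMinOf_comp_test_iff.symm
  | .jump _ _, _, _, _, _ => PF.sem_minWith_jump
  | .nextG _, _, _, _, _ => PF.sem_minWith_nextG
  | .prevG _, _, _, _, _ => PF.sem_minWith_prevG
  | .comp _ _, hπ, ψ, _, _ => by
      rw [isMinOf_comp_comp_test_iff hπ.1 hπ.2 (hπ.2.isMinMonotone_comp_test ψ)]
      exact exists_congr fun _ => and_congr hπ.1.sem_minWith hπ.2.sem_minWith

/-- For `R = ∅` or `R = {Loop}` and a path formula
`π ∈ PDLsf[R]`, there are path formulas `Minπ, Maxπ ∈ PDLsf[R]` defining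
the relations `{(e, min_π(e))}` and `{(e, max_π(e))}`. -/
theorem pdlsf_min_max_definable {P Lab : Type}
    [Fintype P] [Nonempty P] [Fintype Lab] [Nonempty Lab]
    (R : Set PDLOp) (hR : R = ∅ ∨ R = {PDLOp.loop})
    (π : PF P Lab) (hπ : PF.inFrag R π) :
    ∃ mnπ mxπ : PF P Lab, PF.inFrag R mnπ ∧ PF.inFrag R mxπ ∧
      ∀ (M : MSC P Lab) (e f : ℕ),
        (PF.sem M mnπ e f ↔ isMinOf M π e f) ∧
        (PF.sem M mxπ e f ↔ isMaxOf M π e f) := by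
  have hbf : π.BoolFree := PF.boolFree_of_inFrag (by rcases hR with rfl | rfl <;> simp) hπ
  refine ⟨π.minWith EF.top, (π.reverse.minWith EF.top).reverse,
    PF.inFrag_minWith hπ EF.inFrag_top,
    PF.inFrag_reverse (PF.inFrag_minWith (PF.inFrag_reverse hπ) EF.inFrag_top),
    fun M e f => ⟨?_, ?_⟩⟩
  · rw [hbf.sem_minWith, isMinOf_comp_test_top]
  · rw [← PF.sem_reverse, hbf.reverse.sem_minWith, isMinOf_comp_test_top, isMinOf_reverse_iff,
      PF.reverse_reverse]
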